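/- If H is the disjoint union of nonempty forests H₁ and H₂, both of which are χ-bounding, then H is χ-bounding. -/

import Mathlib

/-!
Let `G` be `H₁ ⊕g H₂`-free with a copy `S` of `H₁`. The vertices neither in `S` nor adjacent
to `S` induce an `H₂`-free graph, and the neighbourhood of each vertex of `S` induces an
`H₁ ⊕g H₂`-free graph of smaller clique number. Colouring the parts of this cover of `V(G)`
with disjoint palettes gives `χ ≤ f₂(ω) + |S| + |S| · g(ω - 1)`, where `g` bounds the
chromatic number of `H₁ ⊕g H₂`-free graphs recursively in the clique number; if `G` has no
copy of `H₁` at all, `χ ≤ f₁(ω)`.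
-/

/-- A graph `H` is χ-bounding if the class of graphs with no induced subgraph isomorphic
to `H` is χ-bounded: there is a function `f` with `χ(G) ≤ f(ω(G))` for every finite
`H`-free graph `G`. -/
def ChiBounding {W : Type} (H : SimpleGraph W) : Prop :=
  ∃ f : ℕ → ℕ, ∀ (V : Type) [Fintype V] (G : SimpleGraph V),
    ¬ Nonempty (H ↪g G) → G.chromaticNumber ≤ (f G.cliqueNum : ℕ∞)

open Finset

namespace SimpleGraph

variable {V W₁ W₂ : Type*} {G : SimpleGraph V} {H₁ : SimpleGraph W₁} {H₂ : SimpleGraph W₂}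

theorem cliqueNum_pos [Finite V] [Nonempty V] : 0 < G.cliqueNum := by
  classical
  obtain ⟨v⟩ := ‹Nonempty V›
  have hv : G.IsClique (({v} : Finset V) : Set V) := by simp
  exact (by simpa using hv.card_le_cliqueNum : 1 ≤ G.cliqueNum)

theorem cliqueNum_induce_neighborSet_lt [Finite V] (v : V) :
    (G.induce (G.neighborSet v)).cliqueNum < G.cliqueNum := by
  classical
  obtain ⟨t, ht⟩ := (G.induce (G.neighborSet v)).exists_isNClique_cliqueNum
  rw [isNClique_induce_iff] at ht
  have hvt := ht.insert (a := v) fun b hb => by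
    obtain ⟨⟨b, hvb⟩, -, rfl⟩ := Finset.mem_map.mp hb
    exact hvb
  have := hvt.isClique.card_le_cliqueNum
  rw [hvt.card_eq] at this
  omega

theorem Colorable.of_forall_exists_mem {ι : Type*} [Fintype ι] {A : ι → Set V} {k : ι → ℕ}
    (hcover : ∀ v, ∃ i, v ∈ A i) (hA : ∀ i, (G.induce (A i)).Colorable (k i)) :
    G.Colorable (∑ i, k i) := by
  choose i hi using hcover
  let c := fun j => (hA j).some
  have hvalid : ∀ {a b}, G.Adj a b → ∀ j₁ j₂ (ha : a ∈ A j₁) (hb : b ∈ A j₂),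
      (⟨j₁, c j₁ ⟨a, ha⟩⟩ : Σ j, Fin (k j)) ≠ ⟨j₂, c j₂ ⟨b, hb⟩⟩ := by
    rintro a b hab j j' ha hb heq
    obtain ⟨rfl, hc⟩ := Sigma.mk.inj_iff.mp heq
    exact (c j).valid (by simpa using hab) (eq_of_heq hc)
  simpa using (Coloring.mk (fun v => (⟨i v, c (i v) ⟨v, hi v⟩⟩ : Σ j, Fin (k j)))
    fun hab => hvalid hab _ _ _ _).colorable

namespace Embedding

def sumElim (e₁ : H₁ ↪g G) (e₂ : H₂ ↪g G)
    (hne : ∀ w₁ w₂, e₁ w₁ ≠ e₂ w₂) (hadj : ∀ w₁ w₂, ¬ G.Adj (e₁ w₁) (e₂ w₂)) :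
    H₁ ⊕g H₂ ↪g G where
  toFun := Sum.elim e₁ e₂
  inj' := by
    rintro (a | a) (b | b) h
    · exact congrArg Sum.inl (e₁.injective h)
    · exact absurd h (hne a b)
    · exact absurd h.symm (hne b a)
    · exact congrArg Sum.inr (e₂.injective h)
  map_rel_iff' := by
    rintro (a | a) (b | b)
    · exact e₁.map_rel_iff
    · exact iff_of_false (hadj a b) (by simp)
    · exact iff_of_false (fun h => hadj b a h.symm) (by simp)
    · exact e₂.map_rel_iff

def farSet (e : H₁ ↪g G) : Set V := {v | ∀ w, e w ≠ v ∧ ¬ G.Adj (e w) v}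

def sumOfFarSet (e : H₁ ↪g G) (e₂ : H₂ ↪g G.induce e.farSet) : H₁ ⊕g H₂ ↪g G :=
  e.sumElim ((Embedding.induce _).comp e₂) (fun w₁ w₂ => ((e₂ w₂).2 w₁).1)
    (fun w₁ w₂ => ((e₂ w₂).2 w₁).2)

theorem colorable_of_farSet [Finite W₁] (e : H₁ ↪g G) {a b : ℕ}
    (hfar : (G.induce e.farSet).Colorable a)
    (hnbr : ∀ w, (G.induce (G.neighborSet (e w))).Colorable b) :
    G.Colorable (a + Nat.card W₁ + Nat.card W₁ * b) := by
  have := Fintype.ofFinite W₁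
  let A : Option (W₁ ⊕ W₁) → Set V := fun i =>
    i.elim e.farSet (Sum.elim (fun w => {e w}) (fun w => G.neighborSet (e w)))
  let k : Option (W₁ ⊕ W₁) → ℕ := fun i => i.elim a (Sum.elim (fun _ => 1) (fun _ => b))
  have hcover : ∀ v, ∃ i, v ∈ A i := by
    intro v
    by_contra! h
    have hv : v ∉ e.farSet := h none
    simp only [farSet, Set.mem_ofPred_eq, not_forall, not_and_or, not_not] at hv
    obtain ⟨w, hw | hw⟩ := hv
    · exact h (some (.inl w)) hw.symm
    · exact h (some (.inr w)) hw
  have hA : ∀ i, (G.induce (A i)).Colorable (k i) := by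
    rintro (_ | w | w)
    · exact hfar
    · show (G.induce {e w}).Colorable 1
      exact ⟨.mk (fun _ => 0) fun hxy _ => hxy.ne (Subsingleton.elim _ _)⟩
    · exact hnbr w
  simpa [k, Fintype.sum_option, Fintype.sum_sum_type, Nat.card_eq_fintype_card, add_assoc]
    using Colorable.of_forall_exists_mem hcover hA

end Embedding

end SimpleGraph

open SimpleGraph

def ChiBoundedBy {W : Type*} (H : SimpleGraph W) (f : ℕ → ℕ) : Prop :=
  ∀ (n : ℕ) (V : Type) [Fintype V] (G : SimpleGraph V),
    ¬ Nonempty (H ↪g G) → G.cliqueNum ≤ n → G.Colorable (f n)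

theorem ChiBounding.exists_chiBoundedBy {W : Type} {H : SimpleGraph W} (h : ChiBounding H) :
    ∃ f, ChiBoundedBy H f := by
  obtain ⟨f, hf⟩ := h
  refine ⟨fun n => (range (n + 1)).sup f, fun n V _ G hfree hω => ?_⟩
  refine (chromaticNumber_le_iff_colorable.mp (hf V G hfree)).mono ?_
  exact le_sup (mem_range_succ_iff.mpr hω)

theorem ChiBoundedBy.chiBounding {W : Type} {H : SimpleGraph W} {f : ℕ → ℕ}
    (h : ChiBoundedBy H f) : ChiBounding H :=
  ⟨f, fun V _ G hfree => chromaticNumber_le_iff_colorable.mpr (h _ V G hfree le_rfl)⟩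

def sumChiBound (c : ℕ) (f₁ f₂ : ℕ → ℕ) : ℕ → ℕ
  | 0 => 0
  | n + 1 => max (f₁ (n + 1)) (f₂ (n + 1) + c + c * sumChiBound c f₁ f₂ n)

theorem ChiBoundedBy.sum {W₁ W₂ : Type*} {H₁ : SimpleGraph W₁} {H₂ : SimpleGraph W₂}
    {f₁ f₂ : ℕ → ℕ} (h₁ : ChiBoundedBy H₁ f₁) (h₂ : ChiBoundedBy H₂ f₂) :
    ChiBoundedBy (H₁ ⊕g H₂) (sumChiBound (Nat.card W₁) f₁ f₂) := by
  classical
  intro n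
  induction n with
  | zero =>
    intro V _ G _ hω
    have : IsEmpty V := by
      by_contra! hV
      exact (cliqueNum_pos (G := G)).ne' (Nat.le_zero.mp hω)
    exact .of_isEmpty _
  | succ n ih =>
    intro V _ G hfree hω
    by_cases hH₁ : Nonempty (H₁ ↪g G)
    · obtain ⟨e⟩ := hH₁
      have : Finite W₁ := .of_injective e e.injective
      have hfar : (G.induce e.farSet).Colorable (f₂ (n + 1)) :=
        h₂ _ _ _ (fun ⟨e₂⟩ => hfree ⟨e.sumOfFarSet e₂⟩) ((cliqueNum_induce_le _).trans hω)
      have hnbr : ∀ w, (G.induce (G.neighborSet (e w))).Colorable (sumChiBound _ f₁ f₂ n) :=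
        fun w => ih _ _ (fun ⟨e'⟩ => hfree ⟨(Embedding.induce _).comp e'⟩)
          (by have := cliqueNum_induce_neighborSet_lt (G := G) (e w); omega)
      exact (e.colorable_of_farSet hfar hnbr).mono (le_max_right _ _)
    · exact (h₁ _ _ _ hH₁ hω).mono (le_max_left _ _)

theorem disjUnion_chiBounding_general {W₁ W₂ : Type}
    (H₁ : SimpleGraph W₁) (H₂ : SimpleGraph W₂)
    (h₁ : ChiBounding H₁) (h₂ : ChiBounding H₂) :
    ChiBounding (H₁ ⊕g H₂) := by
  obtain ⟨f₁, hf₁⟩ := h₁.exists_chiBoundedBy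
  obtain ⟨f₂, hf₂⟩ := h₂.exists_chiBoundedBy
  exact (hf₁.sum hf₂).chiBounding

/-- If `H` is the disjoint union of nonempty forests `H₁` and `H₂`, both χ-bounding,
then `H` is χ-bounding. -/
theorem disjUnion_chiBounding {W₁ W₂ : Type} [Fintype W₁] [Fintype W₂]
    [Nonempty W₁] [Nonempty W₂]
    (H₁ : SimpleGraph W₁) (H₂ : SimpleGraph W₂)
    (h₁forest : H₁.IsAcyclic) (h₂forest : H₂.IsAcyclic)
    (h₁ : ChiBounding H₁) (h₂ : ChiBounding H₂) :
    ChiBounding (H₁ ⊕g H₂) :=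
  disjUnion_chiBounding_general H₁ H₂ h₁ h₂
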